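/- Let β₀, β₁ ∈ (0,1) with β₀ + β₁ > 1. For every finite binary string σ, P_{β₀,β₁}(σ0 ∈ Prune(ω) and σ1 ∉ Prune(ω) | σ ∈ Prune(ω)) = 1 − β₁; that is, the conditional probability that a node of the pruned infinite Galton–Watson tree has only a left child is 1 − β₁. -/

import Mathlib

open MeasureTheory

/-- The Galton–Watson tree of `ω`: all binary strings all of whose nonempty prefixes survive. -/
def gwTree (ω : {σ : List Bool // σ ≠ []} → Bool) : Set (List Bool) :=
  {σ | ∀ τ : {σ : List Bool // σ ≠ []}, τ.val <+: σ → ω τ = true}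

/-- The pruned tree: nodes of the Galton–Watson tree above which the tree is infinite
(has infinitely many extensions in the tree). -/
def gwPrune (ω : {σ : List Bool // σ ≠ []} → Bool) : Set (List Bool) :=
  {σ | σ ∈ gwTree ω ∧ {τ | σ <+: τ ∧ τ ∈ gwTree ω}.Infinite}

/-- Probability that coordinate `σ` takes value `b`: it is `1` (survives) with probability
`β₀` if the last bit of `σ` is `0`, and `β₁` if the last bit of `σ` is `1`. -/
def gwP (β₀ β₁ : ℝ) (σ : {σ : List Bool // σ ≠ []}) (b : Bool) : ℝ :=
  if b then (if σ.val.getLast σ.prop = false then β₀ else β₁)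
  else 1 - (if σ.val.getLast σ.prop = false then β₀ else β₁)

/-- `P` is the product measure `P_{β₀,β₁}`: a probability measure with independent coordinates,
coordinate `σ` equal to `1` with probability `β₀` or `β₁` according to the last bit of `σ`,
as expressed by its finite-dimensional distributions. -/
def IsGWMeasure (β₀ β₁ : ℝ) (P : Measure ({σ : List Bool // σ ≠ []} → Bool)) : Prop :=
  IsProbabilityMeasure P ∧
    ∀ (S : Finset {σ : List Bool // σ ≠ []}) (f : {σ : List Bool // σ ≠ []} → Bool),
      P {ω | ∀ σ ∈ S, ω σ = f σ} = ENNReal.ofReal (∏ σ ∈ S, gwP β₀ β₁ σ (f σ))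

/-!
Let `u n` be the probability that the Galton–Watson tree reaches generation `n`. The two
children of the root survive independently, since their subtrees read disjoint sets of
coordinates, and the law of a coordinate depends only on its last bit; so the subtree above
any node reaches `n` further generations with probability `u n` as well, and
`u (n + 1) = 1 - (1 - β₀ u n) (1 - β₁ u n)`. These iterates decrease to a fixed point `L`, the
probability that the subtree above a node is infinite, and they stay above the other fixed point
`(β₀ + β₁ - 1) / (β₀ β₁)`, which is positive when `β₀ + β₁ > 1`.

The event `σ ∈ Tree(ω)` reads only the coordinates on the path to `σ`, so it is independent of
everything above `σ`. Hence `σ` is in the pruned tree with probability `P(σ ∈ Tree) L`, and `σ0`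
is while `σ1` is not with probability `P(σ ∈ Tree) β₀ L (1 - β₁ L)`. The fixed-point equation
reads `β₀ β₁ L = β₀ + β₁ - 1`, so the ratio is `β₀ (1 - β₁ L) = 1 - β₁`.
-/

open ProbabilityTheory Filter Topology

lemma ProbabilityTheory.Indep.measureReal_inter {Ω : Type*} {m₁ m₂ mΩ : MeasurableSpace Ω}
    {μ : Measure Ω} (h : Indep m₁ m₂ μ) {s t : Set Ω} (hs : MeasurableSet[m₁] s)
    (ht : MeasurableSet[m₂] t) : μ.real (s ∩ t) = μ.real s * μ.real t := by
  simp only [measureReal_def, (Indep_iff _ _ _).1 h s t hs ht, ENNReal.toReal_mul]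

lemma ProbabilityTheory.Indep.measureReal_union {Ω : Type*} {m₁ m₂ mΩ : MeasurableSpace Ω}
    {μ : Measure Ω} [IsProbabilityMeasure μ] (h : Indep m₁ m₂ μ) (h₁ : m₁ ≤ mΩ) (h₂ : m₂ ≤ mΩ)
    {s t : Set Ω} (hs : MeasurableSet[m₁] s) (ht : MeasurableSet[m₂] t) :
    μ.real (s ∪ t) = 1 - (1 - μ.real s) * (1 - μ.real t) := by
  rw [← compl_compl (s ∪ t), probReal_compl_eq_one_sub ((h₁ _ hs).union (h₂ _ ht)).compl,
    Set.compl_union, h.measureReal_inter hs.compl ht.compl, probReal_compl_eq_one_sub (h₁ _ hs),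
    probReal_compl_eq_one_sub (h₂ _ ht)]

lemma infinite_iff_forall_exists_length_eq {α : Type*} [Finite α] {T : Set (List α)}
    (hT : ∀ ρ ∈ T, ∀ π, π <+: ρ → π ∈ T) :
    T.Infinite ↔ ∀ n, ∃ ρ ∈ T, ρ.length = n := by
  refine ⟨fun hinf n ↦ ?_, fun h ↦ ?_⟩
  · by_contra! hn
    refine hinf ((List.finite_length_le α n).subset fun ρ hρ ↦ ?_)
    by_contra! hlt
    exact hn _ (hT ρ hρ _ (List.take_prefix n ρ)) (List.length_take_of_le (not_le.1 hlt).le)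
  · choose ρ hρT hρlen using h
    exact Set.infinite_of_injective_forall_mem
      (fun m n hmn ↦ by simpa [hρlen] using congrArg List.length hmn) hρT

namespace GaltonWatson

abbrev Node : Type := {σ : List Bool // σ ≠ []}

def appendLeft (τ : List Bool) (x : Node) : Node := ⟨τ ++ x.1, by simp [x.2]⟩

def child (σ : List Bool) (b : Bool) : Node := appendLeft σ ⟨[b], List.cons_ne_nil b []⟩

/-- The environment seen from `τ`: `gwTree (shift τ ω)` is the part of `gwTree ω` above `τ`,
translated to the root (`append_mem_gwTree_iff`). -/
def shift (τ : List Bool) (ω : Node → Bool) : Node → Bool := ω ∘ appendLeft τ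

lemma shift_append (τ τ' : List Bool) (ω : Node → Bool) :
    shift (τ ++ τ') ω = shift τ' (shift τ ω) :=
  funext fun x ↦ congrArg ω (Subtype.ext (List.append_assoc τ τ' x.1))

lemma nil_mem_gwTree (ω : Node → Bool) : [] ∈ gwTree ω :=
  fun x hx ↦ absurd (List.prefix_nil.1 hx) x.2

lemma mem_gwTree_of_prefix {ω : Node → Bool} {π ρ : List Bool} (hρ : ρ ∈ gwTree ω)
    (hπ : π <+: ρ) : π ∈ gwTree ω :=
  fun x hx ↦ hρ x (hx.trans hπ)

lemma append_mem_gwTree_iff {ω : Node → Bool} {τ ρ : List Bool} :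
    τ ++ ρ ∈ gwTree ω ↔ τ ∈ gwTree ω ∧ ρ ∈ gwTree (shift τ ω) := by
  refine ⟨fun h ↦ ⟨mem_gwTree_of_prefix h (List.prefix_append τ ρ),
    fun x hx ↦ h _ ((List.prefix_append_right_inj τ).2 hx)⟩, fun ⟨hτ, hρ⟩ x hx ↦ ?_⟩
  rcases le_or_gt x.1.length τ.length with hle | hlt
  · exact hτ x (List.prefix_of_prefix_length_le hx (List.prefix_append τ ρ) hle)
  · obtain ⟨π, hπ⟩ := List.prefix_of_prefix_length_le (List.prefix_append τ ρ) hx hlt.le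
    have hπ0 : π ≠ [] := by
      rintro rfl
      simp [← hπ] at hlt
    obtain rfl : x = appendLeft τ ⟨π, hπ0⟩ := Subtype.ext hπ.symm
    exact hρ ⟨π, hπ0⟩ ((List.prefix_append_right_inj τ).1 hx)

lemma singleton_mem_gwTree_iff {ω : Node → Bool} {b : Bool} :
    [b] ∈ gwTree ω ↔ ω ⟨[b], List.cons_ne_nil b []⟩ = true := by
  refine ⟨fun h ↦ h _ List.prefix_rfl, fun h x hx ↦ ?_⟩
  obtain rfl : x = ⟨[b], List.cons_ne_nil b []⟩ :=
    Subtype.ext ((List.prefix_concat_iff (l₂ := [])).1 hx |>.resolve_right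
      fun h ↦ x.2 (List.prefix_nil.1 h))
  exact h

lemma append_singleton_mem_gwTree_iff {ω : Node → Bool} {σ : List Bool} {b : Bool} :
    σ ++ [b] ∈ gwTree ω ↔ σ ∈ gwTree ω ∧ ω (child σ b) = true := by
  rw [append_mem_gwTree_iff, singleton_mem_gwTree_iff]
  rfl

lemma mem_gwPrune_iff {ω : Node → Bool} {σ : List Bool} :
    σ ∈ gwPrune ω ↔ σ ∈ gwTree ω ∧ (gwTree (shift σ ω)).Infinite := by
  refine and_congr_right fun hσ ↦ ?_
  have : {τ | σ <+: τ ∧ τ ∈ gwTree ω} = (σ ++ ·) '' gwTree (shift σ ω) := by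
    ext τ
    constructor
    · rintro ⟨⟨ρ, rfl⟩, h⟩
      exact ⟨ρ, (append_mem_gwTree_iff.1 h).2, rfl⟩
    · rintro ⟨ρ, hρ, rfl⟩
      exact ⟨List.prefix_append σ ρ, append_mem_gwTree_iff.2 ⟨hσ, hρ⟩⟩
  rw [this, Set.infinite_image_iff (List.append_right_injective σ).injOn]

def survives (n : ℕ) : Set (Node → Bool) := {ω | ∃ ρ ∈ gwTree ω, ρ.length = n}

def childEvent (σ : List Bool) (b : Bool) (X : Set (Node → Bool)) : Set (Node → Bool) :=
  {ω | ω (child σ b) = true} ∩ shift (σ ++ [b]) ⁻¹' X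

lemma survives_zero : survives 0 = Set.univ :=
  Set.eq_univ_of_forall fun ω ↦ ⟨[], nil_mem_gwTree ω, rfl⟩

lemma survives_antitone : Antitone survives :=
  antitone_nat_of_succ_le fun n ω ⟨ρ, hρ, hlen⟩ ↦
    ⟨ρ.take n, mem_gwTree_of_prefix hρ (List.take_prefix n ρ), by simp [hlen]⟩

lemma setOf_gwTree_infinite : {ω | (gwTree ω).Infinite} = ⋂ n, survives n := by
  ext ω
  simp only [Set.mem_ofPred_eq, Set.mem_iInter]
  exact infinite_iff_forall_exists_length_eq fun ρ hρ π hπ ↦ mem_gwTree_of_prefix hρ hπ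

lemma mem_survives_succ_iff {ω : Node → Bool} {n : ℕ} :
    ω ∈ survives (n + 1) ↔
      ∃ b, ω ⟨[b], List.cons_ne_nil b []⟩ = true ∧ shift [b] ω ∈ survives n := by
  constructor
  · rintro ⟨_ | ⟨b, ρ⟩, hρ, hlen⟩
    · simp at hlen
    · obtain ⟨hb, hρ⟩ := append_mem_gwTree_iff (τ := [b]).1 hρ
      exact ⟨b, singleton_mem_gwTree_iff.1 hb, ρ, hρ, by simpa using hlen⟩
  · rintro ⟨b, hb, ρ, hρ, rfl⟩
    exact ⟨b :: ρ, append_mem_gwTree_iff (τ := [b]).2 ⟨singleton_mem_gwTree_iff.2 hb, hρ⟩, rfl⟩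

lemma shift_preimage_survives_succ (τ : List Bool) (n : ℕ) :
    shift τ ⁻¹' survives (n + 1) =
      childEvent τ false (survives n) ∪ childEvent τ true (survives n) := by
  ext ω
  simp only [Set.mem_preimage, mem_survives_succ_iff, Bool.exists_bool, childEvent,
    Set.mem_union, Set.mem_inter_iff, shift_append]
  rfl

lemma setOf_mem_gwPrune (σ : List Bool) :
    {ω | σ ∈ gwPrune ω} = {ω | σ ∈ gwTree ω} ∩ shift σ ⁻¹' {ω | (gwTree ω).Infinite} :=
  Set.ext fun _ ↦ mem_gwPrune_iff

lemma setOf_append_singleton_mem_gwPrune (σ : List Bool) (b : Bool) :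
    {ω | σ ++ [b] ∈ gwPrune ω} =
      {ω | σ ∈ gwTree ω} ∩ childEvent σ b {ω | (gwTree ω).Infinite} := by
  ext ω
  simp only [Set.mem_ofPred_eq, mem_gwPrune_iff, append_singleton_mem_gwTree_iff, childEvent,
    Set.mem_inter_iff, Set.mem_preimage]
  tauto

lemma mem_gwPrune_of_append {ω : Node → Bool} {σ τ : List Bool} (h : σ ++ τ ∈ gwPrune ω) :
    σ ∈ gwPrune ω :=
  ⟨mem_gwTree_of_prefix h.1 (List.prefix_append σ τ),
    h.2.mono fun _ h' ↦ ⟨(List.prefix_append σ τ).trans h'.1, h'.2⟩⟩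

lemma disjoint_of_length_lt {S T : Set Node} (h : ∀ x ∈ S, ∀ y ∈ T, x.1.length < y.1.length) :
    Disjoint S T :=
  Set.disjoint_left.2 fun x hxS hxT ↦ lt_irrefl _ (h x hxS x hxT)

lemma length_lt_length_appendLeft (τ : List Bool) (x : Node) :
    τ.length < (appendLeft τ x).1.length := by
  simpa [appendLeft] using List.length_pos_iff.2 x.2

lemma disjoint_ancestors_range_appendLeft (σ : List Bool) :
    Disjoint {x : Node | x.1 <+: σ} (Set.range (appendLeft σ)) :=
  disjoint_of_length_lt <| by
    rintro x hx _ ⟨y, rfl⟩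
    exact hx.length_le.trans_lt (length_lt_length_appendLeft σ y)

lemma disjoint_child_range_appendLeft (σ : List Bool) (b : Bool) :
    Disjoint {child σ b} (Set.range (appendLeft (σ ++ [b]))) :=
  disjoint_of_length_lt <| by
    rintro _ rfl _ ⟨y, rfl⟩
    exact length_lt_length_appendLeft (σ ++ [b]) y

lemma disjoint_subtrees_of_siblings (σ : List Bool) :
    Disjoint {x : Node | σ ++ [false] <+: x.1} {x : Node | σ ++ [true] <+: x.1} :=
  Set.disjoint_left.2 fun _ h₀ h₁ ↦ by
    simpa using (List.prefix_of_prefix_length_le h₀ h₁ (by simp)).eq_of_length (by simp)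

lemma subtree_subset_range_appendLeft (σ : List Bool) (b : Bool) :
    {x : Node | σ ++ [b] <+: x.1} ⊆ Set.range (appendLeft σ) := by
  rintro x ⟨ρ, hρ⟩
  exact ⟨⟨b :: ρ, List.cons_ne_nil b ρ⟩, Subtype.ext (by simpa [appendLeft] using hρ)⟩

variable {β₀ β₁ : ℝ}

def gwStep (β₀ β₁ y : ℝ) : ℝ := 1 - (1 - β₀ * y) * (1 - β₁ * y)

noncomputable def survivalLimit (β₀ β₁ : ℝ) : ℝ := ⨅ n, (gwStep β₀ β₁)^[n] 1

lemma gwStep_mem_Icc (h0 : 0 < β₀) (h1 : 0 < β₁) (h01 : β₀ * β₁ ≤ 1) {x y : ℝ}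
    (hx : β₀ * β₁ * x = β₀ + β₁ - 1) (hx0 : 0 ≤ x) (hy : y ∈ Set.Icc x 1) :
    gwStep β₀ β₁ y ∈ Set.Icc x y := by
  have hc : 0 < β₀ * β₁ := mul_pos h0 h1
  obtain ⟨hxy, hy1⟩ := hy
  constructor
  · have : gwStep β₀ β₁ y - x = (y - x) * (1 - β₀ * β₁ * y) := by
      unfold gwStep; linear_combination (-y) * hx
    nlinarith [mul_le_mul_of_nonneg_left hy1 hc.le]
  · have : gwStep β₀ β₁ y - y = β₀ * β₁ * y * (x - y) := by
      unfold gwStep; linear_combination (-y) * hx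
    nlinarith [mul_nonneg (mul_nonneg hc.le (hx0.trans hxy)) (sub_nonneg.2 hxy)]

lemma iterate_gwStep_succ_mem_Icc (h0 : β₀ ∈ Set.Ioo (0 : ℝ) 1) (h1 : β₁ ∈ Set.Ioo (0 : ℝ) 1)
    (hsum : 1 < β₀ + β₁) (n : ℕ) :
    (gwStep β₀ β₁)^[n + 1] 1 ∈ Set.Icc ((β₀ + β₁ - 1) / (β₀ * β₁)) ((gwStep β₀ β₁)^[n] 1) := by
  have hc : 0 < β₀ * β₁ := mul_pos h0.1 h1.1
  -- the positive fixed point of `gwStep β₀ β₁`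
  set x := (β₀ + β₁ - 1) / (β₀ * β₁)
  have hx : β₀ * β₁ * x = β₀ + β₁ - 1 := mul_div_cancel₀ _ hc.ne'
  have hx1 : x ≤ 1 := (div_le_one hc).2 (by nlinarith [h0.2, h1.2])
  have hstep {y : ℝ} (hy : y ∈ Set.Icc x 1) : gwStep β₀ β₁ y ∈ Set.Icc x y :=
    gwStep_mem_Icc h0.1 h1.1 (by nlinarith [h0.2, h1.2]) hx (div_nonneg (by linarith) hc.le) hy
  have hmem (n : ℕ) : (gwStep β₀ β₁)^[n] 1 ∈ Set.Icc x 1 := by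
    induction n with
    | zero => exact ⟨hx1, le_rfl⟩
    | succ n ih =>
      rw [Function.iterate_succ_apply']
      exact Set.Icc_subset_Icc_right ih.2 (hstep ih)
  rw [Function.iterate_succ_apply']
  exact hstep (hmem n)

lemma div_le_iterate_gwStep (h0 : β₀ ∈ Set.Ioo (0 : ℝ) 1) (h1 : β₁ ∈ Set.Ioo (0 : ℝ) 1)
    (hsum : 1 < β₀ + β₁) (n : ℕ) :
    (β₀ + β₁ - 1) / (β₀ * β₁) ≤ (gwStep β₀ β₁)^[n] 1 :=
  (iterate_gwStep_succ_mem_Icc h0 h1 hsum n).1.trans (iterate_gwStep_succ_mem_Icc h0 h1 hsum n).2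

lemma tendsto_iterate_gwStep (h0 : β₀ ∈ Set.Ioo (0 : ℝ) 1) (h1 : β₁ ∈ Set.Ioo (0 : ℝ) 1)
    (hsum : 1 < β₀ + β₁) :
    Tendsto (fun n ↦ (gwStep β₀ β₁)^[n] 1) atTop (𝓝 (survivalLimit β₀ β₁)) :=
  tendsto_atTop_ciInf (antitone_nat_of_succ_le fun n ↦ (iterate_gwStep_succ_mem_Icc h0 h1 hsum n).2)
    ⟨_, Set.forall_mem_range.2 (div_le_iterate_gwStep h0 h1 hsum)⟩

lemma survivalLimit_pos (h0 : β₀ ∈ Set.Ioo (0 : ℝ) 1) (h1 : β₁ ∈ Set.Ioo (0 : ℝ) 1)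
    (hsum : 1 < β₀ + β₁) :
    0 < survivalLimit β₀ β₁ :=
  (div_pos (by linarith) (mul_pos h0.1 h1.1)).trans_le (le_ciInf (div_le_iterate_gwStep h0 h1 hsum))

lemma mul_mul_survivalLimit (h0 : β₀ ∈ Set.Ioo (0 : ℝ) 1) (h1 : β₁ ∈ Set.Ioo (0 : ℝ) 1)
    (hsum : 1 < β₀ + β₁) :
    β₀ * β₁ * survivalLimit β₀ β₁ = β₀ + β₁ - 1 := by
  have hfix : gwStep β₀ β₁ (survivalLimit β₀ β₁) = survivalLimit β₀ β₁ :=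
    isFixedPt_of_tendsto_iterate (tendsto_iterate_gwStep h0 h1 hsum)
      (by unfold gwStep; fun_prop)
  unfold gwStep at hfix
  refine mul_left_cancel₀ (survivalLimit_pos h0 h1 hsum).ne' ?_
  linear_combination (-1) * hfix

lemma measurableSet_mem_gwTree (σ : List Bool) :
    MeasurableSet[cylinderEvents {x : Node | x.1 <+: σ}] {ω | σ ∈ gwTree ω} := by
  have : {ω | σ ∈ gwTree ω} = ⋂ x : Node, ⋂ (_ : x.1 <+: σ), (fun ω ↦ ω x) ⁻¹' {true} := by
    ext; simp [gwTree]
  rw [this]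
  exact MeasurableSet.iInter fun x : Node ↦ MeasurableSet.iInter fun hx : x.1 <+: σ ↦
    measurable_cylinderEvent_apply (X := fun _ : Node ↦ Bool) (Δ := {x : Node | x.1 <+: σ}) hx
      (measurableSet_singleton true)

lemma measurable_shift (τ : List Bool) :
    Measurable[cylinderEvents (Set.range (appendLeft τ))] (shift τ) :=
  measurable_cylinderEvents_lambda _ fun x ↦ measurable_cylinderEvent_apply (Set.mem_range_self x)

lemma measurableSet_survives (n : ℕ) : MeasurableSet (survives n) := by
  simp only [survives, Set.ofPred_exists, Set.ofPred_and]
  exact MeasurableSet.iUnion fun ρ ↦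
    (cylinderEvents_le_pi _ (measurableSet_mem_gwTree ρ)).inter (MeasurableSet.const _)

lemma measurableSet_gwTree_infinite : MeasurableSet {ω : Node → Bool | (gwTree ω).Infinite} := by
  rw [setOf_gwTree_infinite]
  exact MeasurableSet.iInter measurableSet_survives

lemma measurableSet_childEvent (σ : List Bool) (b : Bool) {X : Set (Node → Bool)}
    (hX : MeasurableSet X) :
    MeasurableSet[cylinderEvents {x : Node | σ ++ [b] <+: x.1}] (childEvent σ b X) :=
  (measurable_cylinderEvent_apply (X := fun _ : Node ↦ Bool) (i := child σ b)
      (List.prefix_refl (σ ++ [b])) (measurableSet_singleton true)).inter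
    ((measurable_shift (σ ++ [b])).mono (cylinderEvents_mono (by
      rintro _ ⟨x, rfl⟩
      exact List.prefix_append (σ ++ [b]) x.1)) le_rfl hX)

lemma gwP_nonneg (h0 : β₀ ∈ Set.Icc (0 : ℝ) 1) (h1 : β₁ ∈ Set.Icc (0 : ℝ) 1)
    (σ : Node) (b : Bool) : 0 ≤ gwP β₀ β₁ σ b := by
  unfold gwP; split_ifs <;> linarith [h0.1, h0.2, h1.1, h1.2]

variable {P : Measure (Node → Bool)}

lemma _root_.IsGWMeasure.iIndepFun_eval (hP : IsGWMeasure β₀ β₁ P) (h0 : β₀ ∈ Set.Icc (0 : ℝ) 1)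
    (h1 : β₁ ∈ Set.Icc (0 : ℝ) 1) : iIndepFun (fun σ (ω : Node → Bool) ↦ ω σ) P := by
  have := hP.1
  classical
  rw [iIndepFun_iff_finset]
  intro S
  change iIndepFun (fun (σ : S) (ω : Node → Bool) ↦ ω σ) P
  rw [iIndepFun_iff_map_fun_eq_pi_map fun σ : S ↦ (measurable_pi_apply (σ : Node)).aemeasurable]
  refine Measure.ext_of_singleton fun g ↦ ?_
  set f : Node → Bool := fun σ ↦ if h : σ ∈ S then g ⟨σ, h⟩ else false
  have hfg : ∀ σ : S, f σ = g σ := fun σ ↦ by simp [f]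
  have hcyl : (fun (ω : Node → Bool) (σ : S) ↦ ω σ) ⁻¹' {g} = {ω | ∀ σ ∈ S, ω σ = f σ} := by
    ext ω
    simp only [Set.mem_preimage, Set.mem_singleton_iff, funext_iff]
    exact ⟨fun h σ hσ ↦ (h ⟨σ, hσ⟩).trans (hfg _).symm, fun h σ ↦ (h σ σ.2).trans (hfg σ)⟩
  rw [Measure.map_apply (measurable_pi_lambda _ fun σ ↦ measurable_pi_apply _)
    (measurableSet_singleton g), hcyl, hP.2, ← Set.univ_pi_singleton g, Measure.pi_pi,
    ENNReal.ofReal_prod_of_nonneg (fun σ _ ↦ gwP_nonneg h0 h1 σ _), ← Finset.prod_coe_sort]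
  refine Finset.prod_congr rfl fun σ _ ↦ ?_
  rw [Measure.map_apply (measurable_pi_apply _) (measurableSet_singleton _), ← hfg,
    show (fun ω : Node → Bool ↦ ω σ) ⁻¹' {f σ} = {ω | ∀ τ ∈ ({σ.1} : Finset Node), ω τ = f τ} by
      ext; simp, hP.2, Finset.prod_singleton]

lemma _root_.IsGWMeasure.indep_cylinderEvents (hP : IsGWMeasure β₀ β₁ P)
    (h0 : β₀ ∈ Set.Icc (0 : ℝ) 1) (h1 : β₁ ∈ Set.Icc (0 : ℝ) 1) {S T : Set Node}
    (hST : Disjoint S T) : Indep (cylinderEvents S) (cylinderEvents T) P :=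
  indep_iSup_of_disjoint (fun x ↦ (measurable_pi_apply x).comap_le)
    ((iIndepFun_iff_iIndep _ _ _).1 (hP.iIndepFun_eval h0 h1)) hST

lemma _root_.IsGWMeasure.measureReal_child (hP : IsGWMeasure β₀ β₁ P) (h0 : β₀ ∈ Set.Icc (0 : ℝ) 1)
    (h1 : β₁ ∈ Set.Icc (0 : ℝ) 1) (σ : List Bool) (b : Bool) :
    P.real {ω | ω (child σ b) = true} = (bif b then β₁ else β₀) := by
  have : {ω | ω (child σ b) = true} =
      {ω : Node → Bool | ∀ x ∈ ({child σ b} : Finset Node), ω x = (fun _ ↦ true) x} := by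
    simp
  rw [measureReal_def, this, hP.2, Finset.prod_singleton,
    ENNReal.toReal_ofReal (gwP_nonneg h0 h1 _ _)]
  cases b <;> simp [gwP, child, appendLeft]

lemma _root_.IsGWMeasure.measureReal_childEvent (hP : IsGWMeasure β₀ β₁ P)
    (h0 : β₀ ∈ Set.Icc (0 : ℝ) 1) (h1 : β₁ ∈ Set.Icc (0 : ℝ) 1) (σ : List Bool) (b : Bool)
    {X : Set (Node → Bool)} (hX : MeasurableSet X) :
    P.real (childEvent σ b X) = (bif b then β₁ else β₀) * P.real (shift (σ ++ [b]) ⁻¹' X) := by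
  have hchild : MeasurableSet[cylinderEvents {child σ b}]
      {ω : Node → Bool | ω (child σ b) = true} :=
    measurable_cylinderEvent_apply (X := fun _ : Node ↦ Bool) (Set.mem_singleton _)
      (measurableSet_singleton true)
  rw [childEvent, (hP.indep_cylinderEvents h0 h1
      (disjoint_child_range_appendLeft σ b)).measureReal_inter hchild (measurable_shift _ hX),
    hP.measureReal_child h0 h1]

lemma _root_.IsGWMeasure.measureReal_shift_preimage_survives (hP : IsGWMeasure β₀ β₁ P)
    (h0 : β₀ ∈ Set.Icc (0 : ℝ) 1) (h1 : β₁ ∈ Set.Icc (0 : ℝ) 1) (τ : List Bool) (n : ℕ) :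
    P.real (shift τ ⁻¹' survives n) = (gwStep β₀ β₁)^[n] 1 := by
  have := hP.1
  induction n generalizing τ with
  | zero => simp [survives_zero]
  | succ n ih =>
    rw [shift_preimage_survives_succ,
      (hP.indep_cylinderEvents h0 h1 (disjoint_subtrees_of_siblings τ)).measureReal_union
        cylinderEvents_le_pi cylinderEvents_le_pi
        (measurableSet_childEvent τ false (measurableSet_survives n))
        (measurableSet_childEvent τ true (measurableSet_survives n)),
      hP.measureReal_childEvent h0 h1 τ false (measurableSet_survives n),
      hP.measureReal_childEvent h0 h1 τ true (measurableSet_survives n), ih, ih,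
      Function.iterate_succ_apply']
    rfl

lemma _root_.IsGWMeasure.measureReal_shift_preimage_gwTree_infinite (hP : IsGWMeasure β₀ β₁ P)
    (h0 : β₀ ∈ Set.Ioo (0 : ℝ) 1) (h1 : β₁ ∈ Set.Ioo (0 : ℝ) 1) (hsum : 1 < β₀ + β₁)
    (τ : List Bool) :
    P.real (shift τ ⁻¹' {ω | (gwTree ω).Infinite}) = survivalLimit β₀ β₁ := by
  have := hP.1
  rw [setOf_gwTree_infinite, Set.preimage_iInter]
  have hmeas (n : ℕ) : MeasurableSet (shift τ ⁻¹' survives n) :=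
    cylinderEvents_le_pi _ (measurable_shift τ (measurableSet_survives n))
  have htend := tendsto_measure_iInter_atTop (μ := P) (fun n ↦ (hmeas n).nullMeasurableSet)
    (fun m n hmn ↦ Set.preimage_mono (survives_antitone hmn)) ⟨0, measure_ne_top P _⟩
  refine tendsto_nhds_unique ((ENNReal.tendsto_toReal (measure_ne_top P _)).comp htend) ?_
  simpa only [Function.comp_def, ← measureReal_def,
    hP.measureReal_shift_preimage_survives (Set.Ioo_subset_Icc_self h0)
      (Set.Ioo_subset_Icc_self h1)] using tendsto_iterate_gwStep h0 h1 hsum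

lemma _root_.IsGWMeasure.measureReal_mem_gwTree_pos (hP : IsGWMeasure β₀ β₁ P) (h0 : 0 < β₀)
    (h1 : 0 < β₁) (σ : List Bool) : 0 < P.real {ω | σ ∈ gwTree ω} := by
  classical
  have hcyl : {ω | σ ∈ gwTree ω} = {ω : Node → Bool |
      ∀ x ∈ σ.inits.toFinset.subtype (· ≠ []), ω x = (fun _ ↦ true) x} := by
    ext ω; simp [gwTree, List.mem_inits]
  have := hP.1
  refine ENNReal.toReal_pos (ne_of_gt ?_) (measure_ne_top P _)
  rw [hcyl, hP.2]
  exact ENNReal.ofReal_pos.2 (Finset.prod_pos fun x _ ↦ by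
    simp only [gwP, if_true]; split_ifs <;> assumption)

lemma measurableSet_setOf_mem_gwPrune (σ : List Bool) : MeasurableSet {ω | σ ∈ gwPrune ω} := by
  rw [setOf_mem_gwPrune]
  exact (cylinderEvents_le_pi _ (measurableSet_mem_gwTree σ)).inter
    (cylinderEvents_le_pi _ (measurable_shift σ measurableSet_gwTree_infinite))

lemma _root_.IsGWMeasure.measureReal_setOf_mem_gwPrune (hP : IsGWMeasure β₀ β₁ P)
    (h0 : β₀ ∈ Set.Ioo (0 : ℝ) 1) (h1 : β₁ ∈ Set.Ioo (0 : ℝ) 1) (hsum : 1 < β₀ + β₁)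
    (σ : List Bool) :
    P.real {ω | σ ∈ gwPrune ω} = P.real {ω | σ ∈ gwTree ω} * survivalLimit β₀ β₁ := by
  rw [setOf_mem_gwPrune, (hP.indep_cylinderEvents (Set.Ioo_subset_Icc_self h0)
      (Set.Ioo_subset_Icc_self h1) (disjoint_ancestors_range_appendLeft σ)).measureReal_inter
      (measurableSet_mem_gwTree σ) (measurable_shift σ measurableSet_gwTree_infinite),
    hP.measureReal_shift_preimage_gwTree_infinite h0 h1 hsum]

lemma _root_.IsGWMeasure.measureReal_setOf_only_left_child_mem_gwPrune
    (hP : IsGWMeasure β₀ β₁ P) (h0 : β₀ ∈ Set.Ioo (0 : ℝ) 1) (h1 : β₁ ∈ Set.Ioo (0 : ℝ) 1)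
    (hsum : 1 < β₀ + β₁) (σ : List Bool) :
    P.real {ω | σ ++ [false] ∈ gwPrune ω ∧ σ ++ [true] ∉ gwPrune ω} =
      P.real {ω | σ ∈ gwTree ω} *
        (β₀ * survivalLimit β₀ β₁ * (1 - β₁ * survivalLimit β₀ β₁)) := by
  have := hP.1
  have h0' := Set.Ioo_subset_Icc_self h0
  have h1' := Set.Ioo_subset_Icc_self h1
  set D := fun b ↦ childEvent σ b {ω : Node → Bool | (gwTree ω).Infinite}
  have hD (b : Bool) := measurableSet_childEvent σ b measurableSet_gwTree_infinite
  have hPD (b : Bool) : P.real (D b) = (bif b then β₁ else β₀) * survivalLimit β₀ β₁ := by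
    rw [hP.measureReal_childEvent h0' h1' σ b measurableSet_gwTree_infinite,
      hP.measureReal_shift_preimage_gwTree_infinite h0 h1 hsum]
  have hD_above : MeasurableSet[cylinderEvents (Set.range (appendLeft σ))] (D false ∩ (D true)ᶜ) :=
    (cylinderEvents_mono (subtree_subset_range_appendLeft σ false) _ (hD false)).inter
      (cylinderEvents_mono (subtree_subset_range_appendLeft σ true) _ (hD true)).compl
  have hset : {ω | σ ++ [false] ∈ gwPrune ω ∧ σ ++ [true] ∉ gwPrune ω} =
      {ω | σ ∈ gwTree ω} ∩ (D false ∩ (D true)ᶜ) := by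
    ext ω
    have h (b : Bool) := Set.ext_iff.1 (setOf_append_singleton_mem_gwPrune σ b) ω
    simp only [Set.mem_ofPred_eq] at h
    simp only [Set.mem_ofPred_eq, h, Set.mem_inter_iff, Set.mem_compl_iff]
    tauto
  have hpath := hP.indep_cylinderEvents h0' h1' (disjoint_ancestors_range_appendLeft σ)
  rw [hset, hpath.measureReal_inter (measurableSet_mem_gwTree σ) hD_above,
    (hP.indep_cylinderEvents h0' h1' (disjoint_subtrees_of_siblings σ)).measureReal_inter
      (hD false) (hD true).compl,
    probReal_compl_eq_one_sub (cylinderEvents_le_pi _ (hD true)), hPD, hPD]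
  rfl

end GaltonWatson

open GaltonWatson

/-- For `β₀, β₁ ∈ (0,1)` with `β₀ + β₁ > 1` and every finite binary string
`σ`: the conditional probability, given `σ ∈ Prune(ω)`, that `σ` has only a left child in
`Prune(ω)` (i.e. `σ0 ∈ Prune(ω)` and `σ1 ∉ Prune(ω)`) is `1 - β₁`. -/
theorem stmt9 (β₀ β₁ : ℝ) (h0 : β₀ ∈ Set.Ioo (0 : ℝ) 1) (h1 : β₁ ∈ Set.Ioo (0 : ℝ) 1)
    (hsum : 1 < β₀ + β₁)
    (P : Measure ({σ : List Bool // σ ≠ []} → Bool)) (hP : IsGWMeasure β₀ β₁ P)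
    (σ : List Bool) :
    ProbabilityTheory.cond P {ω | σ ∈ gwPrune ω}
        {ω | σ ++ [false] ∈ gwPrune ω ∧ σ ++ [true] ∉ gwPrune ω} =
      ENNReal.ofReal (1 - β₁) := by
  have := hP.1
  have hsub : {ω | σ ++ [false] ∈ gwPrune ω ∧ σ ++ [true] ∉ gwPrune ω} ⊆
      {ω | σ ∈ gwPrune ω} := fun ω h ↦ mem_gwPrune_of_append h.1
  have hT := hP.measureReal_mem_gwTree_pos h0.1 h1.1 σ
  have hL := survivalLimit_pos h0 h1 hsum
  have hpos := mul_pos hT hL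
  rw [cond_apply (measurableSet_setOf_mem_gwPrune σ), Set.inter_eq_right.2 hsub,
    ← ofReal_measureReal, ← ofReal_measureReal, hP.measureReal_setOf_mem_gwPrune h0 h1 hsum,
    hP.measureReal_setOf_only_left_child_mem_gwPrune h0 h1 hsum,
    ← ENNReal.ofReal_inv_of_pos hpos, ← ENNReal.ofReal_mul (inv_nonneg.2 hpos.le)]
  congr 1
  field_simp
  linear_combination (-1) * mul_mul_survivalLimit h0 h1 hsum
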